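/- arXiv:2002.05512 — 6 statements merged into one kernel-verified Lean document; each statement's English description precedes it below -/
import Mathlib

section
/- Let Ω be a finite set, A₀, A₁ : Ω → ℝ≥0 probability mass functions with full support, and a, b > 0 nonnegative reals with a + b > 0. Then the function q ↦ a·D_KL(A₁‖q) + b·D_KL(A₀‖q), over probability mass functions q with full support on Ω, attains its minimum uniquely at q(u) = (a·A₁(u) + b·A₀(u))/(a + b). -/
open Finset

noncomputable def KL {Ω : Type*} [Fintype Ω] (A q : Ω → ℝ) : ℝ :=
  ∑ u, A u * Real.log (A u / q u)

/-!
With `m = (a A₁ + b A₀)/(a + b)`, the logarithm splits as `log (A/q) = log (A/m) + log (m/q)`,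
which gives the compensation identity
`a KL(A₁‖q) + b KL(A₀‖q) = a KL(A₁‖m) + b KL(A₀‖m) + (a + b) KL(m‖q)`.
By Gibbs' inequality the last term is nonnegative and vanishes exactly when `q = m`.
-/

open InformationTheory

section Gibbs

variable {Ω : Type*} [Fintype Ω] {p q : Ω → ℝ}

lemma mul_log_div_sub_add_eq_mul_klFun (p : ℝ) {q : ℝ} (hq : q ≠ 0) :
    p * Real.log (p / q) - p + q = q * klFun (p / q) := by
  rw [klFun_apply]
  field_simp
  ring

-- The correction `q - p` turning each summand into `q klFun (p/q)` sums to zero as `∑ p = ∑ q`.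
lemma KL_eq_sum_mul_klFun (hq : ∀ u, 0 < q u) (hsum : ∑ u, p u = ∑ u, q u) :
    KL p q = ∑ u, q u * klFun (p u / q u) := by
  have hcorr : ∑ u, (-p u + q u) = 0 := by
    rw [sum_add_distrib, sum_neg_distrib, hsum, neg_add_cancel]
  calc KL p q = ∑ u, p u * Real.log (p u / q u) + ∑ u, (-p u + q u) := by
        rw [hcorr, add_zero, KL]
    _ = ∑ u, q u * klFun (p u / q u) := by
        rw [← sum_add_distrib]
        refine sum_congr rfl fun u _ => ?_
        rw [← mul_log_div_sub_add_eq_mul_klFun _ (hq u).ne']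
        ring

lemma KL_nonneg (hp : ∀ u, 0 ≤ p u) (hq : ∀ u, 0 < q u) (hsum : ∑ u, p u = ∑ u, q u) :
    0 ≤ KL p q := by
  rw [KL_eq_sum_mul_klFun hq hsum]
  exact sum_nonneg fun u _ => mul_nonneg (hq u).le (klFun_nonneg (div_nonneg (hp u) (hq u).le))

lemma KL_eq_zero_iff (hp : ∀ u, 0 ≤ p u) (hq : ∀ u, 0 < q u) (hsum : ∑ u, p u = ∑ u, q u) :
    KL p q = 0 ↔ q = p := by
  have hterm_nonneg : ∀ u ∈ univ, 0 ≤ q u * klFun (p u / q u) := fun u _ =>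
    mul_nonneg (hq u).le (klFun_nonneg (div_nonneg (hp u) (hq u).le))
  rw [KL_eq_sum_mul_klFun hq hsum, sum_eq_zero_iff_of_nonneg hterm_nonneg, funext_iff]
  refine forall_congr' fun u => ?_
  rw [imp_iff_right (mem_univ u), mul_eq_zero, or_iff_right (hq u).ne', klFun_eq_zero_iff (div_nonneg (hp u) (hq u).le),
    div_eq_one_iff_eq (hq u).ne', eq_comm]

end Gibbs

section Compensation

variable {Ω : Type*} [Fintype Ω]

lemma mul_log_div_eq_add (A : ℝ) {m q : ℝ} (hm : m ≠ 0) (hq : q ≠ 0) :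
    A * Real.log (A / q) = A * Real.log (A / m) + A * Real.log (m / q) := by
  rcases eq_or_ne A 0 with rfl | hA
  · simp
  rw [← mul_add, ← Real.log_mul (div_ne_zero hA hm) (div_ne_zero hm hq), div_mul_div_cancel₀ hm]

lemma mul_KL_add_mul_KL_eq {A₀ A₁ m q : Ω → ℝ} {a b : ℝ} (hm : ∀ u, m u ≠ 0)
    (hq : ∀ u, q u ≠ 0) (hmix : ∀ u, (a + b) * m u = a * A₁ u + b * A₀ u) :
    a * KL A₁ q + b * KL A₀ q = a * KL A₁ m + b * KL A₀ m + (a + b) * KL m q := by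
  simp only [KL, mul_sum, ← sum_add_distrib]
  refine sum_congr rfl fun u _ => ?_
  rw [mul_log_div_eq_add (A₁ u) (hm u) (hq u), mul_log_div_eq_add (A₀ u) (hm u) (hq u)]
  linear_combination -Real.log (m u / q u) * hmix u

end Compensation

/-- RealnessGAN Theorem 1 (pointwise form): the weighted sum of KL divergences
`a·KL(A₁‖q) + b·KL(A₀‖q)` over full-support pmfs `q` attains its minimum
uniquely at the mixture `m = (a·A₁ + b·A₀)/(a+b)`. -/
theorem stmt1 {Ω : Type*} [Fintype Ω] (A₀ A₁ : Ω → ℝ)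
    (hA₀pos : ∀ u, 0 < A₀ u) (hA₀sum : ∑ u, A₀ u = 1)
    (hA₁pos : ∀ u, 0 < A₁ u) (hA₁sum : ∑ u, A₁ u = 1)
    (a b : ℝ) (ha : 0 < a) (hb : 0 < b) :
    ∀ q : Ω → ℝ, (∀ u, 0 < q u) → (∑ u, q u = 1) →
      (a * KL A₁ (fun u => (a * A₁ u + b * A₀ u) / (a + b))
        + b * KL A₀ (fun u => (a * A₁ u + b * A₀ u) / (a + b))
        ≤ a * KL A₁ q + b * KL A₀ q)
      ∧ (a * KL A₁ q + b * KL A₀ q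
          = a * KL A₁ (fun u => (a * A₁ u + b * A₀ u) / (a + b))
            + b * KL A₀ (fun u => (a * A₁ u + b * A₀ u) / (a + b))
        ↔ q = fun u => (a * A₁ u + b * A₀ u) / (a + b)) := by
  intro q hq hqsum
  set m : Ω → ℝ := fun u => (a * A₁ u + b * A₀ u) / (a + b)
  have hab : 0 < a + b := add_pos ha hb
  have hmpos : ∀ u, 0 < m u := fun u =>
    div_pos (add_pos (mul_pos ha (hA₁pos u)) (mul_pos hb (hA₀pos u))) hab
  have hmsum : ∑ u, m u = ∑ u, q u := by
    simp only [m, ← sum_div, sum_add_distrib, ← mul_sum, hA₀sum, hA₁sum, hqsum]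
    field_simp
  have hsplit := mul_KL_add_mul_KL_eq (fun u => (hmpos u).ne') (fun u => (hq u).ne')
    (fun u => mul_div_cancel₀ (a * A₁ u + b * A₀ u) hab.ne')
  have hgap : 0 ≤ (a + b) * KL m q :=
    mul_nonneg hab.le (KL_nonneg (fun u => (hmpos u).le) hq hmsum)
  refine ⟨by linarith, ?_⟩
  rw [hsplit, add_eq_left, mul_eq_zero, or_iff_right hab.ne']
  exact KL_eq_zero_iff (fun u => (hmpos u).le) hq hmsum
end

section
/- Under the hypotheses of the previous statement (finite X, Ω; full-support pmfs p, g on X and A₀, A₁ on Ω), and assuming there exists u with A₁(u) ≠ A₀(u): the KL divergence D_KL(P‖Q) between P(x,u) = (p(x)·A₁(u) + g(x)·A₀(u))/2 and Q(x,u) = (p(x)+g(x))·(A₁(u)+A₀(u))/4 equals 0 if and only if p = g. -/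
open Finset

private lemma term_ge {P Q : ℝ} (hP : 0 < P) (hQ : 0 < Q) :
    P - Q ≤ P * Real.log (P / Q) := by
  have h := Real.log_le_sub_one_of_pos (x := Q / P) (div_pos hQ hP)
  have hlog : Real.log (P / Q) = - Real.log (Q / P) := by
    rw [← Real.log_inv]; congr 1; field_simp
  have hPQ : P * (Q / P - 1) = Q - P := by field_simp
  have h2 : P * Real.log (Q / P) ≤ Q - P := by
    have := mul_le_mul_of_nonneg_left h hP.le
    linarith
  rw [hlog, mul_neg]; linarith

private lemma term_gt {P Q : ℝ} (hP : 0 < P) (hQ : 0 < Q) (hne : P ≠ Q) :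
    P - Q < P * Real.log (P / Q) := by
  have hq : Q / P ≠ 1 := by
    intro h; exact hne ((div_eq_one_iff_eq hP.ne').mp h).symm
  have h := Real.log_lt_sub_one_of_pos (div_pos hQ hP) hq
  have hlog : Real.log (P / Q) = - Real.log (Q / P) := by
    rw [← Real.log_inv]; congr 1; field_simp
  have hPQ : P * (Q / P - 1) = Q - P := by field_simp
  have h2 : P * Real.log (Q / P) < Q - P := by
    have := mul_lt_mul_of_pos_left h hP
    linarith
  rw [hlog, mul_neg]; linarith

private lemma gibbs {ι : Type*} [Fintype ι] (P Q : ι → ℝ)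
    (hP : ∀ i, 0 < P i) (hQ : ∀ i, 0 < Q i) (hsum : ∑ i, P i = ∑ i, Q i) :
    KL P Q = 0 ↔ ∀ i, P i = Q i := by
  constructor
  · intro h
    by_contra hc
    push_neg at hc
    obtain ⟨j, hj⟩ := hc
    have hlt : ∑ i, (P i - Q i) < ∑ i, P i * Real.log (P i / Q i) := by
      apply Finset.sum_lt_sum
      · intro i _; exact term_ge (hP i) (hQ i)
      · exact ⟨j, Finset.mem_univ j, term_gt (hP j) (hQ j) hj⟩
    rw [Finset.sum_sub_distrib, hsum, sub_self] at hlt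
    rw [KL] at h; linarith
  · intro h
    rw [KL]
    apply Finset.sum_eq_zero
    intro i _
    rw [h i, div_self (hQ i).ne', Real.log_one, mul_zero]

/-- RealnessGAN Theorem 2: assuming the anchors differ at some outcome, the gap
divergence vanishes iff `p = g`. -/
theorem stmt6 {X Ω : Type*} [Fintype X] [Fintype Ω]
    (p g : X → ℝ) (A₀ A₁ : Ω → ℝ)
    (hp : ∀ x, 0 < p x) (hpsum : ∑ x, p x = 1)
    (hg : ∀ x, 0 < g x) (hgsum : ∑ x, g x = 1)
    (hA₀ : ∀ u, 0 < A₀ u) (hA₀sum : ∑ u, A₀ u = 1)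
    (hA₁ : ∀ u, 0 < A₁ u) (hA₁sum : ∑ u, A₁ u = 1)
    (hne : ∃ u, A₁ u ≠ A₀ u) :
    KL (fun y : X × Ω => (p y.1 * A₁ y.2 + g y.1 * A₀ y.2) / 2)
       (fun y : X × Ω => (p y.1 + g y.1) * (A₁ y.2 + A₀ y.2) / 4) = 0
    ↔ p = g := by
  have hPpos : ∀ y : X × Ω, 0 < (p y.1 * A₁ y.2 + g y.1 * A₀ y.2) / 2 := by
    intro y
    have := mul_pos (hp y.1) (hA₁ y.2)
    have := mul_pos (hg y.1) (hA₀ y.2)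
    positivity
  have hQpos : ∀ y : X × Ω, 0 < (p y.1 + g y.1) * (A₁ y.2 + A₀ y.2) / 4 := by
    intro y
    have := hp y.1; have := hg y.1; have := hA₀ y.2; have := hA₁ y.2
    positivity
  have hsum : ∑ y : X × Ω, (p y.1 * A₁ y.2 + g y.1 * A₀ y.2) / 2
      = ∑ y : X × Ω, (p y.1 + g y.1) * (A₁ y.2 + A₀ y.2) / 4 := by
    rw [← Finset.univ_product_univ, Finset.sum_product, Finset.sum_product]
    have h1 : ∀ x, ∑ u, (p x * A₁ u + g x * A₀ u) / 2 = (p x + g x) / 2 := by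
      intro x
      rw [← Finset.sum_div, Finset.sum_add_distrib, ← Finset.mul_sum,
        ← Finset.mul_sum, hA₀sum, hA₁sum, mul_one, mul_one]
    have h2 : ∀ x, ∑ u, (p x + g x) * (A₁ u + A₀ u) / 4 = (p x + g x) / 2 := by
      intro x
      rw [← Finset.sum_div, ← Finset.mul_sum, Finset.sum_add_distrib,
        hA₀sum, hA₁sum]
      ring
    simp only [h1, h2]
  rw [gibbs _ _ hPpos hQpos hsum]
  constructor
  · intro h
    obtain ⟨u, hu⟩ := hne
    funext x
    have := h (x, u)
    simp only at this
    have key : (p x - g x) * (A₁ u - A₀ u) = 0 := by ring_nf; nlinarith [this]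
    rcases mul_eq_zero.mp key with h1 | h2
    · linarith
    · exact absurd (by linarith) hu
  · intro h y
    rw [h]; ring
end

section
/- Let X and Ω be finite sets, p, g probability mass functions on X with full support, A₀, A₁ probability mass functions on Ω with full support. Define V(D) = ∑_x p(x)·D_KL(A₁‖D(x)) + ∑_x g(x)·D_KL(A₀‖D(x)), minimized over families D : X → (pmfs on Ω with full support). Then the minimum value of V is ∑_x (p(x)+g(x))·h_x − ∑_x p(x)·H(A₁) − ∑_x g(x)·H(A₀), where m_x(u) = (p(x)·A₁(u)+g(x)·A₀(u))/(p(x)+g(x)), h_x = −∑_u m_x(u)·log m_x(u) is its entropy, and H(A) = −∑_u A(u)·log A(u). Equivalently, min V = ∑_x (p(x)+g(x))·H(m_x) − H(A₁) − H(A₀). -/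
open Finset

noncomputable def entH {Ω : Type*} [Fintype Ω] (A : Ω → ℝ) : ℝ :=
  - ∑ u, A u * Real.log (A u)

lemma gibbs_s7 {Ω : Type*} [Fintype Ω] (m q : Ω → ℝ) (hm : ∀ u, 0 < m u) (hq : ∀ u, 0 < q u)
    (hms : ∑ u, m u = 1) (hqs : ∑ u, q u = 1) : 0 ≤ KL m q := by
  have h : ∀ u, m u * Real.log (q u / m u) ≤ q u - m u := by
    intro u
    have h1 := Real.log_le_sub_one_of_pos (div_pos (hq u) (hm u))
    calc m u * Real.log (q u / m u) ≤ m u * (q u / m u - 1) :=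
          mul_le_mul_of_nonneg_left h1 (hm u).le
      _ = q u - m u := by
          rw [mul_sub, mul_one, mul_div_cancel₀ _ (ne_of_gt (hm u))]
  have hsum : ∑ u, m u * Real.log (q u / m u) ≤ 0 := by
    calc ∑ u, m u * Real.log (q u / m u) ≤ ∑ u, (q u - m u) :=
          Finset.sum_le_sum (fun u _ => h u)
      _ = 0 := by rw [Finset.sum_sub_distrib, hms, hqs]; ring
  have heq : KL m q = - ∑ u, m u * Real.log (q u / m u) := by
    unfold KL
    rw [← Finset.sum_neg_distrib]
    refine Finset.sum_congr rfl fun u _ => ?_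
    rw [Real.log_div (ne_of_gt (hm u)) (ne_of_gt (hq u)),
        Real.log_div (ne_of_gt (hq u)) (ne_of_gt (hm u))]
    ring
  linarith

lemma keylem {Ω : Type*} [Fintype Ω] (a b : ℝ) (ha : 0 < a) (hb : 0 < b)
    (A₀ A₁ q : Ω → ℝ) (hA₀ : ∀ u, 0 < A₀ u) (hA₁ : ∀ u, 0 < A₁ u) (hq : ∀ u, 0 < q u) :
    a * KL A₁ q + b * KL A₀ q
      = (a + b) * entH (fun u => (a * A₁ u + b * A₀ u) / (a + b))
          - a * entH A₁ - b * entH A₀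
        + (a + b) * KL (fun u => (a * A₁ u + b * A₀ u) / (a + b)) q := by
  have hab : (0:ℝ) < a + b := by linarith
  have hm : ∀ u, 0 < (a * A₁ u + b * A₀ u) / (a + b) := fun u =>
    div_pos (by have := hA₁ u; have := hA₀ u; nlinarith) hab
  simp only [KL, entH, Finset.mul_sum, neg_neg, mul_neg, ← Finset.sum_neg_distrib,
    ← Finset.sum_add_distrib, ← Finset.sum_sub_distrib]
  refine Finset.sum_congr rfl fun u _ => ?_
  rw [Real.log_div (ne_of_gt (hA₁ u)) (ne_of_gt (hq u)),
      Real.log_div (ne_of_gt (hA₀ u)) (ne_of_gt (hq u)),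
      Real.log_div (ne_of_gt (hm u)) (ne_of_gt (hq u))]
  field_simp
  ring

/-- Value of the inner minimization in the RealnessGAN minimax game:
`min_D V(D) = ∑_x (p(x)+g(x))·H(m_x) − H(A₁) − H(A₀)`, attained at the
optimal discriminator `D*(x) = m_x`. -/
theorem stmt7 {X Ω : Type*} [Fintype X] [Fintype Ω]
    (p g : X → ℝ) (A₀ A₁ : Ω → ℝ)
    (hp : ∀ x, 0 < p x) (hpsum : ∑ x, p x = 1)
    (hg : ∀ x, 0 < g x) (hgsum : ∑ x, g x = 1)
    (hA₀ : ∀ u, 0 < A₀ u) (hA₀sum : ∑ u, A₀ u = 1)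
    (hA₁ : ∀ u, 0 < A₁ u) (hA₁sum : ∑ u, A₁ u = 1) :
    (∀ D : X → Ω → ℝ, (∀ x u, 0 < D x u) → (∀ x, ∑ u, D x u = 1) →
      (∑ x, (p x + g x) * entH (fun u => (p x * A₁ u + g x * A₀ u) / (p x + g x)))
          - entH A₁ - entH A₀
        ≤ ∑ x, p x * KL A₁ (D x) + ∑ x, g x * KL A₀ (D x))
    ∧ (∑ x, p x * KL A₁ (fun u => (p x * A₁ u + g x * A₀ u) / (p x + g x))
        + ∑ x, g x * KL A₀ (fun u => (p x * A₁ u + g x * A₀ u) / (p x + g x))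
      = (∑ x, (p x + g x) * entH (fun u => (p x * A₁ u + g x * A₀ u) / (p x + g x)))
          - entH A₁ - entH A₀) := by
  have hab : ∀ x, (0:ℝ) < p x + g x := fun x => by have := hp x; have := hg x; linarith
  have hm : ∀ x u, 0 < (p x * A₁ u + g x * A₀ u) / (p x + g x) := fun x u =>
    div_pos (by have := hA₁ u; have := hA₀ u; have := hp x; have := hg x; nlinarith) (hab x)
  have hmsum : ∀ x, ∑ u, (p x * A₁ u + g x * A₀ u) / (p x + g x) = 1 := by
    intro x
    rw [← Finset.sum_div, Finset.sum_add_distrib, ← Finset.mul_sum, ← Finset.mul_sum,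
      hA₀sum, hA₁sum, mul_one, mul_one, div_self (ne_of_gt (hab x))]
  -- entH-sum helper
  have hsum1 : ∀ (c : ℝ), ∑ x, p x * c = c := fun c => by
    rw [← Finset.sum_mul, hpsum, one_mul]
  have hsum2 : ∀ (c : ℝ), ∑ x, g x * c = c := fun c => by
    rw [← Finset.sum_mul, hgsum, one_mul]
  constructor
  · intro D hD hDsum
    have key : ∀ x, (p x + g x) * entH (fun u => (p x * A₁ u + g x * A₀ u) / (p x + g x))
          - p x * entH A₁ - g x * entH A₀
        ≤ p x * KL A₁ (D x) + g x * KL A₀ (D x) := by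
      intro x
      have h1 := keylem (p x) (g x) (hp x) (hg x) A₀ A₁ (D x) hA₀ hA₁ (hD x)
      have h2 := gibbs_s7 (fun u => (p x * A₁ u + g x * A₀ u) / (p x + g x)) (D x)
        (hm x) (hD x) (hmsum x) (hDsum x)
      nlinarith [hab x]
    calc (∑ x, (p x + g x) * entH (fun u => (p x * A₁ u + g x * A₀ u) / (p x + g x)))
          - entH A₁ - entH A₀
        = ∑ x, ((p x + g x) * entH (fun u => (p x * A₁ u + g x * A₀ u) / (p x + g x))
            - p x * entH A₁ - g x * entH A₀) := by
          rw [Finset.sum_sub_distrib, Finset.sum_sub_distrib, hsum1, hsum2]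
      _ ≤ ∑ x, (p x * KL A₁ (D x) + g x * KL A₀ (D x)) := Finset.sum_le_sum fun x _ => key x
      _ = ∑ x, p x * KL A₁ (D x) + ∑ x, g x * KL A₀ (D x) := Finset.sum_add_distrib
  · have key : ∀ x, p x * KL A₁ (fun u => (p x * A₁ u + g x * A₀ u) / (p x + g x))
        + g x * KL A₀ (fun u => (p x * A₁ u + g x * A₀ u) / (p x + g x))
        = (p x + g x) * entH (fun u => (p x * A₁ u + g x * A₀ u) / (p x + g x))
            - p x * entH A₁ - g x * entH A₀ := by
      intro x
      have h1 := keylem (p x) (g x) (hp x) (hg x) A₀ A₁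
        (fun u => (p x * A₁ u + g x * A₀ u) / (p x + g x)) hA₀ hA₁ (hm x)
      have h2 : KL (fun u => (p x * A₁ u + g x * A₀ u) / (p x + g x))
          (fun u => (p x * A₁ u + g x * A₀ u) / (p x + g x)) = 0 := by
        unfold KL
        refine Finset.sum_eq_zero fun u _ => ?_
        rw [div_self (ne_of_gt (hm x u)), Real.log_one, mul_zero]
      rw [h2] at h1
      linarith
    rw [← Finset.sum_add_distrib]
    calc ∑ x, (p x * KL A₁ (fun u => (p x * A₁ u + g x * A₀ u) / (p x + g x))
          + g x * KL A₀ (fun u => (p x * A₁ u + g x * A₀ u) / (p x + g x)))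
        = ∑ x, ((p x + g x) * entH (fun u => (p x * A₁ u + g x * A₀ u) / (p x + g x))
            - p x * entH A₁ - g x * entH A₀) := Finset.sum_congr rfl fun x _ => key x
      _ = _ := by rw [Finset.sum_sub_distrib, Finset.sum_sub_distrib, hsum1, hsum2]
end

section
/- Let X, Ω be finite sets, p, g pmfs on X, A₀, A₁ pmfs on Ω, all with full support, and let D*(x)(u) = (p(x)·A₁(u) + g(x)·A₀(u))/(p(x)+g(x)). If p = g, then D*(x) = (A₁ + A₀)/2 for every x ∈ X; conversely, if D*(x) is the same distribution for all x and there exists u with A₁(u) ≠ A₀(u), then p(x)/(p(x)+g(x)) is constant in x, hence p = c·g for a constant c, and since both sum to 1, p = g. -/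
open Finset

/-- Characterization of when the optimal RealnessGAN discriminator
`D*(x)(u) = (p(x)·A₁(u) + g(x)·A₀(u))/(p(x)+g(x))` is constant across
inputs. -/
theorem stmt13 {X Ω : Type*} [Fintype X] [Fintype Ω]
    (p g : X → ℝ) (A₀ A₁ : Ω → ℝ)
    (hp : ∀ x, 0 < p x) (hpsum : ∑ x, p x = 1)
    (hg : ∀ x, 0 < g x) (hgsum : ∑ x, g x = 1)
    (hA₀ : ∀ u, 0 < A₀ u) (hA₀sum : ∑ u, A₀ u = 1)
    (hA₁ : ∀ u, 0 < A₁ u) (hA₁sum : ∑ u, A₁ u = 1) :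
    (p = g → ∀ x u, (p x * A₁ u + g x * A₀ u) / (p x + g x) = (A₁ u + A₀ u) / 2)
    ∧ ((∀ x y u, (p x * A₁ u + g x * A₀ u) / (p x + g x)
          = (p y * A₁ u + g y * A₀ u) / (p y + g y))
        → (∃ u, A₁ u ≠ A₀ u) → p = g) := by
  constructor
  · intro hpg x u
    rw [hpg]
    have h : (0:ℝ) < g x + g x := by have := hg x; linarith
    rw [div_eq_div_iff (ne_of_gt h) (by norm_num : (2:ℝ) ≠ 0)]
    ring
  · intro hD ⟨u, hu⟩
    have key : ∀ x y : X, p x * g y = p y * g x := by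
      intro x y
      have hx : p x + g x ≠ 0 := by have := hp x; have := hg x; linarith
      have hy : p y + g y ≠ 0 := by have := hp y; have := hg y; linarith
      have h := hD x y u
      rw [div_eq_div_iff hx hy] at h
      have h2 : (p x * g y - p y * g x) * (A₁ u - A₀ u) = 0 := by nlinarith [h]
      have h3 : p x * g y - p y * g x = 0 := by
        rcases mul_eq_zero.1 h2 with h3 | h3
        · exact h3
        · exact absurd (by linarith) hu
      linarith
    funext x
    have := calc p x = p x * ∑ y, g y := by rw [hgsum]; ring
      _ = ∑ y, p x * g y := by rw [Finset.mul_sum]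
      _ = ∑ y, p y * g x := by exact Finset.sum_congr rfl fun y _ => key x y
      _ = (∑ y, p y) * g x := by rw [Finset.sum_mul]
      _ = g x := by rw [hpsum]; ring
    exact this
end

section
/- With P = (p⊗A₁ + g⊗A₀)/2 and Q = ((p+g)/2) ⊗ ((A₁+A₀)/2) on a finite X × Ω (p, g full-support pmfs on X; A₀, A₁ full-support pmfs on Ω), D_KL(P‖Q) = 0 if and only if P is a product distribution, if and only if p = g or A₁ = A₀. -/
open Finset

lemma gibbs_aux {ι : Type*} [Fintype ι] (P Q : ι → ℝ)
    (hP : ∀ i, 0 < P i) (hQ : ∀ i, 0 < Q i)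
    (hPs : ∑ i, P i = 1) (hQs : ∑ i, Q i = 1) :
    KL P Q = 0 ↔ ∀ i, P i = Q i := by
  have key : ∀ i, P i - Q i ≤ P i * Real.log (P i / Q i) := by
    intro i
    have h := Real.log_le_sub_one_of_pos (div_pos (hQ i) (hP i))
    have hlog : Real.log (P i / Q i) = - Real.log (Q i / P i) := by
      rw [← Real.log_inv, inv_div]
    rw [hlog]
    have hx : P i * (Q i / P i) = Q i := by
      rw [mul_comm]; exact div_mul_cancel₀ _ (hP i).ne'
    nlinarith [mul_le_mul_of_nonneg_left h (hP i).le]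
  constructor
  · intro h0 i
    by_contra hne
    have hstrict : P i - Q i < P i * Real.log (P i / Q i) := by
      have h := Real.log_lt_sub_one_of_pos (div_pos (hQ i) (hP i))
        (by
          intro h1
          exact hne ((div_eq_one_iff_eq (hP i).ne').mp h1).symm)
      have hlog : Real.log (P i / Q i) = - Real.log (Q i / P i) := by
        rw [← Real.log_inv, inv_div]
      rw [hlog]
      have hx : P i * (Q i / P i) = Q i := by
        rw [mul_comm]; exact div_mul_cancel₀ _ (hP i).ne'
      nlinarith [mul_lt_mul_of_pos_left h (hP i)]
    have hlt : ∑ j, (P j - Q j) < ∑ j, P j * Real.log (P j / Q j) :=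
      Finset.sum_lt_sum (fun j _ => key j) ⟨i, Finset.mem_univ i, hstrict⟩
    rw [Finset.sum_sub_distrib, hPs, hQs, sub_self] at hlt
    rw [KL] at h0
    linarith
  · intro h
    rw [KL]
    apply Finset.sum_eq_zero
    intro i _
    rw [h i, div_self (hQ i).ne', Real.log_one, mul_zero]

/-- Mutual-information interpretation of the gap divergence: `D_KL(P‖Q) = 0`
iff `P` is a product distribution, iff `p = g` or `A₁ = A₀`. -/
theorem stmt17 {X Ω : Type*} [Fintype X] [Fintype Ω]
    (p g : X → ℝ) (A₀ A₁ : Ω → ℝ)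
    (hp : ∀ x, 0 < p x) (hpsum : ∑ x, p x = 1)
    (hg : ∀ x, 0 < g x) (hgsum : ∑ x, g x = 1)
    (hA₀ : ∀ u, 0 < A₀ u) (hA₀sum : ∑ u, A₀ u = 1)
    (hA₁ : ∀ u, 0 < A₁ u) (hA₁sum : ∑ u, A₁ u = 1) :
    (KL (fun y : X × Ω => (p y.1 * A₁ y.2 + g y.1 * A₀ y.2) / 2)
        (fun y : X × Ω => (p y.1 + g y.1) / 2 * ((A₁ y.2 + A₀ y.2) / 2)) = 0
      ↔ ∀ x u, (p x * A₁ u + g x * A₀ u) / 2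
          = (∑ v, (p x * A₁ v + g x * A₀ v) / 2)
            * (∑ y, (p y * A₁ u + g y * A₀ u) / 2))
    ∧ (KL (fun y : X × Ω => (p y.1 * A₁ y.2 + g y.1 * A₀ y.2) / 2)
        (fun y : X × Ω => (p y.1 + g y.1) / 2 * ((A₁ y.2 + A₀ y.2) / 2)) = 0
      ↔ p = g ∨ A₁ = A₀) := by
  set P : X × Ω → ℝ := fun y => (p y.1 * A₁ y.2 + g y.1 * A₀ y.2) / 2 with hPdef
  set Q : X × Ω → ℝ := fun y => (p y.1 + g y.1) / 2 * ((A₁ y.2 + A₀ y.2) / 2) with hQdef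
  have hPpos : ∀ i, 0 < P i := fun i => by
    have := hp i.1; have := hg i.1; have := hA₀ i.2; have := hA₁ i.2
    simp only [hPdef]; positivity
  have hQpos : ∀ i, 0 < Q i := fun i => by
    have := hp i.1; have := hg i.1; have := hA₀ i.2; have := hA₁ i.2
    simp only [hQdef]; positivity
  have hrow : ∀ x, ∑ v, (p x * A₁ v + g x * A₀ v) / 2 = (p x + g x) / 2 := by
    intro x
    simp only [div_eq_mul_inv, ← Finset.sum_mul, Finset.sum_add_distrib,
      ← Finset.mul_sum, hA₀sum, hA₁sum, mul_one]
  have hcol : ∀ u, ∑ y, (p y * A₁ u + g y * A₀ u) / 2 = (A₁ u + A₀ u) / 2 := by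
    intro u
    simp only [div_eq_mul_inv, ← Finset.sum_mul, Finset.sum_add_distrib, hpsum, hgsum]
    ring
  have hPsum : ∑ i, P i = 1 := by
    rw [Fintype.sum_prod_type]
    simp only [hPdef]
    calc ∑ x, ∑ v, (p x * A₁ v + g x * A₀ v) / 2
        = ∑ x, (p x + g x) / 2 := by
          exact Finset.sum_congr rfl fun x _ => hrow x
      _ = 1 := by
          simp only [div_eq_mul_inv, ← Finset.sum_mul, Finset.sum_add_distrib,
            hpsum, hgsum]; norm_num
  have hQsum : ∑ i, Q i = 1 := by
    rw [Fintype.sum_prod_type]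
    simp only [hQdef, ← Finset.mul_sum]
    have hΩ : ∑ v : Ω, (A₁ v + A₀ v) / 2 = 1 := by
      simp only [div_eq_mul_inv, ← Finset.sum_mul, Finset.sum_add_distrib,
        hA₀sum, hA₁sum]; norm_num
    simp only [hΩ, mul_one]
    simp only [div_eq_mul_inv, ← Finset.sum_mul, Finset.sum_add_distrib,
      hpsum, hgsum]; norm_num
  have hgibbs := gibbs_aux P Q hPpos hQpos hPsum hQsum
  have heq1 : (∀ i, P i = Q i) ↔ ∀ x u, (p x * A₁ u + g x * A₀ u) / 2
      = (∑ v, (p x * A₁ v + g x * A₀ v) / 2)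
        * (∑ y, (p y * A₁ u + g y * A₀ u) / 2) := by
    constructor
    · intro h x u
      rw [hrow x, hcol u]
      exact h (x, u)
    · intro h i
      have := h i.1 i.2
      rw [hrow i.1, hcol i.2] at this
      exact this
  have heq2 : (∀ i, P i = Q i) ↔ p = g ∨ A₁ = A₀ := by
    constructor
    · intro h
      by_cases hpg : p = g
      · exact Or.inl hpg
      · right
        obtain ⟨x, hx⟩ := Function.ne_iff.mp hpg
        funext u
        have := h (x, u)
        simp only [hPdef, hQdef] at this
        have key : (p x - g x) * (A₁ u - A₀ u) = 0 := by nlinarith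
        rcases mul_eq_zero.mp key with h1 | h1
        · exact absurd (sub_eq_zero.mp h1) hx
        · exact sub_eq_zero.mp h1
    · intro h i
      simp only [hPdef, hQdef]
      rcases h with h | h <;> rw [h] <;> ring
  exact ⟨hgibbs.trans heq1, hgibbs.trans heq2⟩
end

section
/- Let Ω be finite, A₀, A₁ full-support pmfs on Ω, and for t ∈ (0,1) let m_t = t·A₁ + (1−t)·A₀. Then the function t ↦ D_KL(A₁‖m_t) is nonincreasing on (0,1) and t ↦ D_KL(A₀‖m_t) is nondecreasing on (0,1). -/
open Finset

lemma key_ineq {Ω : Type*} [Fintype Ω] (A₀ A₁ : Ω → ℝ)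
    (hA₀ : ∀ u, 0 < A₀ u) (hA₀sum : ∑ u, A₀ u = 1)
    (hA₁ : ∀ u, 0 < A₁ u) (hA₁sum : ∑ u, A₁ u = 1)
    (t : ℝ) (ht0 : 0 < t) (ht1 : t < 1) :
    ∑ u, A₀ u * A₁ u / (t * A₁ u + (1 - t) * A₀ u) ≤ 1 := by
  have hm : ∀ u, 0 < t * A₁ u + (1 - t) * A₀ u := fun u =>
    add_pos (mul_pos ht0 (hA₁ u)) (mul_pos (by linarith) (hA₀ u))
  calc ∑ u, A₀ u * A₁ u / (t * A₁ u + (1 - t) * A₀ u)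
      ≤ ∑ u, (t * A₀ u + (1 - t) * A₁ u) := by
        apply Finset.sum_le_sum
        intro u _
        rw [div_le_iff₀ (hm u)]
        nlinarith [sq_nonneg (A₀ u - A₁ u), mul_pos ht0 (show (0:ℝ) < 1 - t by linarith),
          (hA₀ u), (hA₁ u)]
    _ = 1 := by
        rw [Finset.sum_add_distrib, ← Finset.mul_sum, ← Finset.mul_sum, hA₀sum, hA₁sum]
        ring

lemma KL_mono_aux {Ω : Type*} [Fintype Ω] (A B m₁ m₂ : Ω → ℝ)
    (hA : ∀ u, 0 < A u) (hAsum : ∑ u, A u = 1)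
    (hm₁ : ∀ u, 0 < m₁ u) (hm₂ : ∀ u, 0 < m₂ u)
    (c : ℝ) (hc0 : 0 ≤ c) (hc1 : c ≤ 1)
    (hid : ∀ u, m₁ u = c * m₂ u + (1 - c) * B u)
    (hkey : ∑ u, A u * B u / m₂ u ≤ 1) :
    KL A m₂ ≤ KL A m₁ := by
  have h : KL A m₂ - KL A m₁ ≤ 0 := by
    calc KL A m₂ - KL A m₁ = ∑ u, A u * Real.log (m₁ u / m₂ u) := by
          unfold KL
          rw [← Finset.sum_sub_distrib]
          apply Finset.sum_congr rfl
          intro u _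
          rw [Real.log_div (hA u).ne' (hm₂ u).ne', Real.log_div (hA u).ne' (hm₁ u).ne',
            Real.log_div (hm₁ u).ne' (hm₂ u).ne']
          ring
      _ ≤ ∑ u, A u * (m₁ u / m₂ u - 1) := by
          apply Finset.sum_le_sum
          intro u _
          exact mul_le_mul_of_nonneg_left
            (Real.log_le_sub_one_of_pos (div_pos (hm₁ u) (hm₂ u))) (hA u).le
      _ = ∑ u, (c * A u + (1 - c) * (A u * B u / m₂ u) - A u) := by
          apply Finset.sum_congr rfl
          intro u _
          rw [hid u]
          have h2 := (hm₂ u).ne'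
          field_simp
      _ = c * (∑ u, A u) + (1 - c) * (∑ u, A u * B u / m₂ u) - ∑ u, A u := by
          rw [Finset.sum_sub_distrib, Finset.sum_add_distrib, ← Finset.mul_sum,
            ← Finset.mul_sum]
      _ ≤ 0 := by rw [hAsum]; nlinarith
  linarith

/-- Monotonicity of the divergence from each anchor to the mixture
`m_t = t·A₁ + (1−t)·A₀`: `t ↦ KL(A₁‖m_t)` is nonincreasing and
`t ↦ KL(A₀‖m_t)` is nondecreasing on `(0,1)`. -/
theorem stmt19 {Ω : Type*} [Fintype Ω] (A₀ A₁ : Ω → ℝ)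
    (hA₀ : ∀ u, 0 < A₀ u) (hA₀sum : ∑ u, A₀ u = 1)
    (hA₁ : ∀ u, 0 < A₁ u) (hA₁sum : ∑ u, A₁ u = 1) :
    ∀ s ∈ Set.Ioo (0 : ℝ) 1, ∀ t ∈ Set.Ioo (0 : ℝ) 1, s ≤ t →
      KL A₁ (fun u => t * A₁ u + (1 - t) * A₀ u)
          ≤ KL A₁ (fun u => s * A₁ u + (1 - s) * A₀ u)
      ∧ KL A₀ (fun u => s * A₁ u + (1 - s) * A₀ u)
          ≤ KL A₀ (fun u => t * A₁ u + (1 - t) * A₀ u) := by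
  rintro s ⟨hs0, hs1⟩ t ⟨ht0, ht1⟩ hst
  have hms : ∀ u, 0 < s * A₁ u + (1 - s) * A₀ u := fun u =>
    add_pos (mul_pos hs0 (hA₁ u)) (mul_pos (by linarith) (hA₀ u))
  have hmt : ∀ u, 0 < t * A₁ u + (1 - t) * A₀ u := fun u =>
    add_pos (mul_pos ht0 (hA₁ u)) (mul_pos (by linarith) (hA₀ u))
  constructor
  · apply KL_mono_aux A₁ A₀ _ _ hA₁ hA₁sum hms hmt (s / t)
      (div_nonneg hs0.le ht0.le) (by rw [div_le_one ht0]; exact hst)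
    · intro u
      have ht := ht0.ne'
      field_simp
      ring
    · calc ∑ u, A₁ u * A₀ u / (t * A₁ u + (1 - t) * A₀ u)
          = ∑ u, A₀ u * A₁ u / (t * A₁ u + (1 - t) * A₀ u) := by
            apply Finset.sum_congr rfl; intros; ring_nf
        _ ≤ 1 := key_ineq A₀ A₁ hA₀ hA₀sum hA₁ hA₁sum t ht0 ht1
  · apply KL_mono_aux A₀ A₁ _ _ hA₀ hA₀sum hmt hms ((1 - t) / (1 - s))
      (div_nonneg (by linarith) (by linarith))
      (by rw [div_le_one (by linarith)]; linarith)
    · intro u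
      have hs : (1 - s) ≠ 0 := by linarith
      field_simp
      ring
    · exact key_ineq A₀ A₁ hA₀ hA₀sum hA₁ hA₁sum s hs0 hs1
end
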